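/- arXiv:1901.03620 — 5 statements merged into one kernel-verified Lean document; each statement's English description precedes it below -/
import Mathlib

section
/- Fix a cell index l and an active user k ∈ A_l, and let all square-root powers ρ_{i,t}, ρ̂_{i,t} be nonnegative. Then the leading coefficient A_{l,k}(ρ̂,ρ) satisfies A_{l,k}(ρ̂,ρ) ≥ σ⁴ > 0; the quadratic function u ↦ e_{l,k}(u, ρ̂, ρ) attains its unique global minimum over ℝ at u = u^opt_{l,k}(ρ̂,ρ) := √(M K) ρ_{l,k} ρ̂_{l,k} β_{l,k}^l / A_{l,k}(ρ̂,ρ); the minimum value equals 1/(1 + SINR_{l,k}(ρ̂,ρ)); and consequently e_{l,k}(u, ρ̂, ρ) ≥ 1/(1 + SINR_{l,k}(ρ̂,ρ)) > 0 for every u ∈ ℝ. -/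
open Finset Filter

noncomputable section

/-- `Pset A k` : the set of cells in which user index `k` is active,
i.e. `P_k = {i : k ∈ A_i}`. -/
def Pset {L K : ℕ} (A : Fin L → Finset (Fin K)) (k : Fin K) : Finset (Fin L) :=
  Finset.univ.filter fun i => k ∈ A i

/-- The SINR denominator `D_{l,k}` for pilot powers `phat` and data powers `p`. -/
def Dterm {L K : ℕ} (M : ℕ) (σ2 : ℝ) (A : Fin L → Finset (Fin K))
    (β : Fin L → Fin K → Fin L → ℝ) (phat p : Fin L → Fin K → ℝ)
    (l : Fin L) (k : Fin K) : ℝ :=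
  (M : ℝ) * (K : ℝ) * ∑ i ∈ (Pset A k).erase l, p i k * phat i k * β i k l ^ 2 +
    ((K : ℝ) * ∑ i ∈ Pset A k, phat i k * β i k l + σ2) *
      ((∑ i, ∑ t ∈ A i, p i t * β i t l) + σ2)

/-- `SINR_{l,k}` for pilot powers `phat` and data powers `p`. -/
def SINR {L K : ℕ} (M : ℕ) (σ2 : ℝ) (A : Fin L → Finset (Fin K))
    (β : Fin L → Fin K → Fin L → ℝ) (phat p : Fin L → Fin K → ℝ)
    (l : Fin L) (k : Fin K) : ℝ :=
  (M : ℝ) * (K : ℝ) * p l k * phat l k * β l k l ^ 2 / Dterm M σ2 A β phat p l k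

/-- `SINR_{l,k}(ρ̂, ρ)` : the SINR evaluated at squared square-root powers. -/
def SINRsq {L K : ℕ} (M : ℕ) (σ2 : ℝ) (A : Fin L → Finset (Fin K))
    (β : Fin L → Fin K → Fin L → ℝ) (rhat rho : Fin L → Fin K → ℝ)
    (l : Fin L) (k : Fin K) : ℝ :=
  SINR M σ2 A β (fun i t => rhat i t ^ 2) (fun i t => rho i t ^ 2) l k

/-- The mean square error `e_{l,k}(u, ρ̂, ρ)`. -/
def eMSE {L K : ℕ} (M : ℕ) (σ2 : ℝ) (A : Fin L → Finset (Fin K))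
    (β : Fin L → Fin K → Fin L → ℝ) (u : ℝ) (rhat rho : Fin L → Fin K → ℝ)
    (l : Fin L) (k : Fin K) : ℝ :=
  (M : ℝ) * (K : ℝ) * u ^ 2 * ∑ i ∈ Pset A k, rho i k ^ 2 * rhat i k ^ 2 * β i k l ^ 2
    - 2 * Real.sqrt ((M : ℝ) * (K : ℝ)) * rho l k * rhat l k * u * β l k l
    + u ^ 2 * ((K : ℝ) * ∑ i ∈ Pset A k, rhat i k ^ 2 * β i k l + σ2) *
        ((∑ i, ∑ t ∈ A i, rho i t ^ 2 * β i t l) + σ2)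
    + 1

/-- The leading (quadratic in `u`) coefficient `A_{l,k}(ρ̂, ρ)` of `e_{l,k}`. -/
def Acoef {L K : ℕ} (M : ℕ) (σ2 : ℝ) (A : Fin L → Finset (Fin K))
    (β : Fin L → Fin K → Fin L → ℝ) (rhat rho : Fin L → Fin K → ℝ)
    (l : Fin L) (k : Fin K) : ℝ :=
  (M : ℝ) * (K : ℝ) * ∑ i ∈ Pset A k, rho i k ^ 2 * rhat i k ^ 2 * β i k l ^ 2 +
    ((K : ℝ) * ∑ i ∈ Pset A k, rhat i k ^ 2 * β i k l + σ2) *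
      ((∑ i, ∑ t ∈ A i, rho i t ^ 2 * β i t l) + σ2)

/-- The optimal beamforming coefficient `u^opt_{l,k}(ρ̂, ρ)`. -/
def uopt {L K : ℕ} (M : ℕ) (σ2 : ℝ) (A : Fin L → Finset (Fin K))
    (β : Fin L → Fin K → Fin L → ℝ) (rhat rho : Fin L → Fin K → ℝ)
    (l : Fin L) (k : Fin K) : ℝ :=
  Real.sqrt ((M : ℝ) * (K : ℝ)) * rho l k * rhat l k * β l k l /
    Acoef M σ2 A β rhat rho l k

/-- The weighted-MMSE objective `F(u, w, ρ̂, ρ)`. -/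
def Fobj {L K : ℕ} (M : ℕ) (σ2 : ℝ) (A : Fin L → Finset (Fin K))
    (β : Fin L → Fin K → Fin L → ℝ) (u w rhat rho : Fin L → Fin K → ℝ) : ℝ :=
  ∑ l, ∑ k ∈ A l, (w l k * eMSE M σ2 A β (u l k) rhat rho l k - Real.log (w l k))

/-- The pilot-power quadratic coefficient `η̂_{l,k}(u, w, ρ)`. -/
def etaHat {L K : ℕ} (M : ℕ) (σ2 : ℝ) (A : Fin L → Finset (Fin K))
    (β : Fin L → Fin K → Fin L → ℝ) (u w rho : Fin L → Fin K → ℝ)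
    (l : Fin L) (k : Fin K) : ℝ :=
  rho l k ^ 2 * (M : ℝ) * (K : ℝ) * ∑ i ∈ Pset A k, w i k * u i k ^ 2 * β l k i ^ 2 +
    (K : ℝ) * ∑ j ∈ Pset A k, w j k * u j k ^ 2 * β l k j *
      ((∑ i, ∑ t ∈ A i, rho i t ^ 2 * β i t j) + σ2)

/-- The data-power quadratic coefficient `η_{l,k}(u, w, ρ̂)`. -/
def etaData {L K : ℕ} (M : ℕ) (σ2 : ℝ) (A : Fin L → Finset (Fin K))
    (β : Fin L → Fin K → Fin L → ℝ) (u w rhat : Fin L → Fin K → ℝ)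
    (l : Fin L) (k : Fin K) : ℝ :=
  rhat l k ^ 2 * (M : ℝ) * (K : ℝ) * ∑ i ∈ Pset A k, w i k * u i k ^ 2 * β l k i ^ 2 +
    ∑ i, ∑ t ∈ A i, w i t * u i t ^ 2 * β l k i *
      ((K : ℝ) * ∑ j ∈ Pset A t, rhat j t ^ 2 * β j t i + σ2)

/-- For fixed `l` and active `k ∈ A l`, with nonnegative square-root
powers, the leading coefficient satisfies `A_{l,k} ≥ σ⁴ > 0`; the quadratic
`u ↦ e_{l,k}(u, ρ̂, ρ)` attains its unique global minimum at `u = u^opt_{l,k}`;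
the minimum value is `1/(1 + SINR_{l,k})`; and `e_{l,k}(u) ≥ 1/(1 + SINR_{l,k}) > 0`
for every real `u`. -/
theorem stmt0 {L K : ℕ} (M : ℕ) (hL : 0 < L) (hK : 0 < K) (hM : 0 < M)
    (σ2 : ℝ) (hσ : 0 < σ2)
    (A : Fin L → Finset (Fin K))
    (β : Fin L → Fin K → Fin L → ℝ) (hβ : ∀ i t l, 0 ≤ β i t l)
    (rhat rho : Fin L → Fin K → ℝ)
    (hrhat : ∀ i t, 0 ≤ rhat i t) (hrho : ∀ i t, 0 ≤ rho i t)
    (l : Fin L) (k : Fin K) (hk : k ∈ A l) :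
    σ2 ^ 2 ≤ Acoef M σ2 A β rhat rho l k ∧ 0 < σ2 ^ 2 ∧
    (∀ u : ℝ, u ≠ uopt M σ2 A β rhat rho l k →
      eMSE M σ2 A β (uopt M σ2 A β rhat rho l k) rhat rho l k <
        eMSE M σ2 A β u rhat rho l k) ∧
    eMSE M σ2 A β (uopt M σ2 A β rhat rho l k) rhat rho l k =
      1 / (1 + SINRsq M σ2 A β rhat rho l k) ∧
    (∀ u : ℝ, 1 / (1 + SINRsq M σ2 A β rhat rho l k) ≤ eMSE M σ2 A β u rhat rho l k) ∧
    0 < 1 / (1 + SINRsq M σ2 A β rhat rho l k) := by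
  classical
  have hl : l ∈ Pset A k := by simp [Pset, hk]
  set Bc : ℝ := Real.sqrt ((M : ℝ) * (K : ℝ)) * rho l k * rhat l k * β l k l with hBc
  set Ac : ℝ := Acoef M σ2 A β rhat rho l k with hAc
  set Dc : ℝ := Dterm M σ2 A β (fun i t => rhat i t ^ 2) (fun i t => rho i t ^ 2) l k
    with hDc
  have hB2 : Bc ^ 2 = (M : ℝ) * (K : ℝ) * (rho l k ^ 2 * rhat l k ^ 2 * β l k l ^ 2) := by
    rw [hBc, mul_pow, mul_pow, mul_pow, Real.sq_sqrt (by positivity)]; ring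
  have hS1 : 0 ≤ ∑ i ∈ (Pset A k).erase l, rho i k ^ 2 * rhat i k ^ 2 * β i k l ^ 2 :=
    Finset.sum_nonneg fun i _ => by positivity
  have hS2 : 0 ≤ ∑ i ∈ Pset A k, rhat i k ^ 2 * β i k l :=
    Finset.sum_nonneg fun i _ => by have := hβ i k l; positivity
  have hS3 : 0 ≤ ∑ i, ∑ t ∈ A i, rho i t ^ 2 * β i t l :=
    Finset.sum_nonneg fun i _ => Finset.sum_nonneg fun t _ => by
      have := hβ i t l; positivity
  have hDσ : σ2 ^ 2 ≤ Dc := by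
    rw [hDc, Dterm]
    have h1 : 0 ≤ ∑ i ∈ (Pset A k).erase l,
        rho i k ^ 2 * rhat i k ^ 2 * β i k l ^ 2 := hS1
    have hMK : (0:ℝ) ≤ (M : ℝ) * (K : ℝ) := by positivity
    nlinarith [mul_nonneg hMK h1, mul_nonneg hS2 hS3,
      mul_nonneg (mul_nonneg (Nat.cast_nonneg K : (0:ℝ) ≤ K) hS2) hS3,
      mul_nonneg (mul_nonneg (Nat.cast_nonneg K : (0:ℝ) ≤ K) hS2) hσ.le,
      mul_nonneg hσ.le hS3]
  have hAD : Ac = Dc + Bc ^ 2 := by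
    rw [hAc, hDc, Acoef, Dterm, hB2,
      ← Finset.add_sum_erase _ (fun i => rho i k ^ 2 * rhat i k ^ 2 * β i k l ^ 2) hl]
    ring
  have hDpos : 0 < Dc := lt_of_lt_of_le (by positivity) hDσ
  have hApos : 0 < Ac := by nlinarith [sq_nonneg Bc]
  have hAσ : σ2 ^ 2 ≤ Ac := by nlinarith [sq_nonneg Bc]
  have hSval : SINRsq M σ2 A β rhat rho l k = Bc ^ 2 / Dc := by
    rw [SINRsq, SINR, hB2, ← hDc]; ring_nf
  have hfrac : 1 / (1 + SINRsq M σ2 A β rhat rho l k) = Dc / Ac := by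
    rw [hSval, hAD]
    field_simp
  have he : ∀ u : ℝ, eMSE M σ2 A β u rhat rho l k = Ac * u ^ 2 - 2 * Bc * u + 1 := by
    intro u
    rw [eMSE, hAc, Acoef, hBc]; ring
  have huopt : uopt M σ2 A β rhat rho l k = Bc / Ac := by
    rw [uopt, hBc, hAc]
  have hAne : Ac ≠ 0 := hApos.ne'
  have hD' : Dc = Ac - Bc ^ 2 := by linarith
  have hemin : eMSE M σ2 A β (uopt M σ2 A β rhat rho l k) rhat rho l k = Dc / Ac := by
    rw [he, huopt, hD']
    field_simp
    ring
  refine ⟨hAσ, by positivity, ?_, hemin.trans hfrac.symm, ?_, ?_⟩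
  · intro u hu
    rw [he, he, huopt]
    have hune : u - Bc / Ac ≠ 0 := sub_ne_zero.mpr (by rwa [huopt] at hu)
    have hkey : 0 < Ac * (u - Bc / Ac) ^ 2 :=
      mul_pos hApos (by positivity)
    have hq : Ac * u ^ 2 - 2 * Bc * u + 1
        = (Ac * (Bc / Ac) ^ 2 - 2 * Bc * (Bc / Ac) + 1) + Ac * (u - Bc / Ac) ^ 2 := by
      field_simp; ring
    linarith [hq, hkey]
  · intro u
    rw [hfrac, he]
    have hq : Ac * u ^ 2 - 2 * Bc * u + 1
        = Dc / Ac + Ac * (u - Bc / Ac) ^ 2 := by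
      rw [hD']; field_simp; ring
    nlinarith [mul_nonneg hApos.le (sq_nonneg (u - Bc / Ac))]
  · rw [hfrac]; exact div_pos hDpos hApos
end
end

section
/- Let all square-root powers ρ_{i,t}, ρ̂_{i,t} be nonnegative and let n = Σ_{l=1}^L |A_l|. Then the infimum over all u ∈ ℝⁿ and all w ∈ (0,∞)ⁿ (indexed by pairs (l,k) with k ∈ A_l) of the weighted-MMSE objective F(u,w,ρ̂,ρ) equals Σ_{l=1}^L |A_l| − Σ_{l=1}^L Σ_{k∈A_l} ln(1 + SINR_{l,k}(ρ̂,ρ)), and this infimum is attained at u_{l,k} = u^opt_{l,k}(ρ̂,ρ) and w_{l,k} = 1 + SINR_{l,k}(ρ̂,ρ). -/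
open Finset Filter

noncomputable section

/-!
For fixed `(l, k)` the MSE is the quadratic `A_{l,k} u² - 2 B u + 1` in `u`, where
`B = √(MK) ρ_{l,k} ρ̂_{l,k} β^l_{l,k}` and `A_{l,k} = D_{l,k} + B²`. Its minimum over `u` is
`D_{l,k} / A_{l,k} = 1 / (1 + SINR_{l,k})`, attained at `u^opt_{l,k} = B / A_{l,k}`.
Minimising `w e - ln w` over `w > 0` gives `1 + ln e`, attained at `w = 1 / e`. Hence each summand
of `F` is at least `1 - ln (1 + SINR_{l,k})`, with equality at `(u^opt_{l,k}, 1 + SINR_{l,k})`,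
and summing over `(l, k)` gives the claim.
-/

lemma quadratic_ge_div {S D B : ℝ} (hS : 0 < S) (hSDB : S = D + B ^ 2) (u : ℝ) :
    D / S ≤ S * u ^ 2 - 2 * B * u + 1 := by
  rw [div_le_iff₀ hS]
  nlinarith [sq_nonneg (S * u - B)]

lemma quadratic_at_vertex {S D B : ℝ} (hS : 0 < S) (hSDB : S = D + B ^ 2) :
    S * (B / S) ^ 2 - 2 * B * (B / S) + 1 = D / S := by
  field_simp
  linear_combination hSDB

lemma one_add_log_le_mul_sub_log {c w : ℝ} (hc : 0 < c) (hw : 0 < w) :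
    1 + Real.log c ≤ w * c - Real.log w := by
  have := Real.log_le_sub_one_of_pos (mul_pos hw hc)
  rw [Real.log_mul hw.ne' hc.ne'] at this
  linarith

lemma one_sub_log_le_weighted_quadratic {S D B : ℝ} (hD : 0 < D) (hSDB : S = D + B ^ 2)
    (u : ℝ) {w : ℝ} (hw : 0 < w) :
    1 - Real.log (S / D) ≤ w * (S * u ^ 2 - 2 * B * u + 1) - Real.log w := by
  have hS : 0 < S := by rw [hSDB]; positivity
  calc 1 - Real.log (S / D) = 1 + Real.log (D / S) := by
        rw [Real.log_div hS.ne' hD.ne', Real.log_div hD.ne' hS.ne']; ring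
    _ ≤ w * (D / S) - Real.log w := one_add_log_le_mul_sub_log (by positivity) hw
    _ ≤ w * (S * u ^ 2 - 2 * B * u + 1) - Real.log w := by
        gcongr; exact quadratic_ge_div hS hSDB u

lemma weighted_quadratic_at_opt {S D B : ℝ} (hD : 0 < D) (hSDB : S = D + B ^ 2) :
    S / D * (S * (B / S) ^ 2 - 2 * B * (B / S) + 1) - Real.log (S / D) =
      1 - Real.log (S / D) := by
  have hS : 0 < S := by rw [hSDB]; positivity
  rw [quadratic_at_vertex hS hSDB]
  field_simp

section Model

variable {L K : ℕ} (M : ℕ) (σ2 : ℝ) (A : Fin L → Finset (Fin K))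
  (β : Fin L → Fin K → Fin L → ℝ) (rhat rho : Fin L → Fin K → ℝ)

def signalAmp (l : Fin L) (k : Fin K) : ℝ :=
  Real.sqrt ((M : ℝ) * (K : ℝ)) * rho l k * rhat l k * β l k l

lemma eMSE_eq_quadratic (u : ℝ) (l : Fin L) (k : Fin K) :
    eMSE M σ2 A β u rhat rho l k =
      Acoef M σ2 A β rhat rho l k * u ^ 2 - 2 * signalAmp M β rhat rho l k * u + 1 := by
  simp only [eMSE, Acoef, signalAmp]
  ring

lemma Acoef_eq_Dterm_add_sq {l : Fin L} {k : Fin K} (hk : k ∈ A l) :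
    Acoef M σ2 A β rhat rho l k =
      Dterm M σ2 A β (fun i t => rhat i t ^ 2) (fun i t => rho i t ^ 2) l k +
        signalAmp M β rhat rho l k ^ 2 := by
  have hl : l ∈ Pset A k := by simp [Pset, hk]
  have hsqrt : Real.sqrt ((M : ℝ) * (K : ℝ)) ^ 2 = (M : ℝ) * (K : ℝ) :=
    Real.sq_sqrt (by positivity)
  simp only [Acoef, Dterm, signalAmp]
  rw [← Finset.sum_erase_add _ _ hl, mul_pow, mul_pow, mul_pow, hsqrt]
  ring

variable {σ2 β}

lemma Dterm_pos (hσ : 0 < σ2) (hβ : ∀ i t l, 0 ≤ β i t l) {phat p : Fin L → Fin K → ℝ}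
    (hphat : ∀ i t, 0 ≤ phat i t) (hp : ∀ i t, 0 ≤ p i t) (l : Fin L) (k : Fin K) :
    0 < Dterm M σ2 A β phat p l k := by
  have hinterf : 0 ≤ ∑ i ∈ (Pset A k).erase l, p i k * phat i k * β i k l ^ 2 :=
    Finset.sum_nonneg fun i _ => by have := hp i k; have := hphat i k; positivity
  have hpilot : 0 ≤ ∑ i ∈ Pset A k, phat i k * β i k l :=
    Finset.sum_nonneg fun i _ => mul_nonneg (hphat i k) (hβ i k l)
  have hdata : 0 ≤ ∑ i, ∑ t ∈ A i, p i t * β i t l :=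
    Finset.sum_nonneg fun i _ => Finset.sum_nonneg fun t _ => mul_nonneg (hp i t) (hβ i t l)
  unfold Dterm
  positivity

lemma Dterm_sq_pos (hσ : 0 < σ2) (hβ : ∀ i t l, 0 ≤ β i t l) (l : Fin L) (k : Fin K) :
    0 < Dterm M σ2 A β (fun i t => rhat i t ^ 2) (fun i t => rho i t ^ 2) l k :=
  Dterm_pos M A hσ hβ (fun _ _ => sq_nonneg _) (fun _ _ => sq_nonneg _) l k

lemma one_add_SINRsq_eq_div (hσ : 0 < σ2) (hβ : ∀ i t l, 0 ≤ β i t l)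
    {l : Fin L} {k : Fin K} (hk : k ∈ A l) :
    1 + SINRsq M σ2 A β rhat rho l k =
      Acoef M σ2 A β rhat rho l k /
        Dterm M σ2 A β (fun i t => rhat i t ^ 2) (fun i t => rho i t ^ 2) l k := by
  have hD := Dterm_sq_pos M A rhat rho hσ hβ l k
  have hsqrt : Real.sqrt ((M : ℝ) * (K : ℝ)) ^ 2 = (M : ℝ) * (K : ℝ) :=
    Real.sq_sqrt (by positivity)
  rw [Acoef_eq_Dterm_add_sq M σ2 A β rhat rho hk, SINRsq, SINR, signalAmp]
  field_simp
  rw [hsqrt]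
  ring

lemma one_sub_log_one_add_SINRsq_le (hσ : 0 < σ2) (hβ : ∀ i t l, 0 ≤ β i t l)
    {l : Fin L} {k : Fin K} (hk : k ∈ A l) (u : ℝ) {w : ℝ} (hw : 0 < w) :
    1 - Real.log (1 + SINRsq M σ2 A β rhat rho l k) ≤
      w * eMSE M σ2 A β u rhat rho l k - Real.log w := by
  rw [one_add_SINRsq_eq_div M A rhat rho hσ hβ hk, eMSE_eq_quadratic]
  exact one_sub_log_le_weighted_quadratic (Dterm_sq_pos M A rhat rho hσ hβ l k)
    (Acoef_eq_Dterm_add_sq M σ2 A β rhat rho hk) u hw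

lemma weighted_eMSE_uopt (hσ : 0 < σ2) (hβ : ∀ i t l, 0 ≤ β i t l)
    {l : Fin L} {k : Fin K} (hk : k ∈ A l) :
    (1 + SINRsq M σ2 A β rhat rho l k) *
        eMSE M σ2 A β (uopt M σ2 A β rhat rho l k) rhat rho l k -
        Real.log (1 + SINRsq M σ2 A β rhat rho l k) =
      1 - Real.log (1 + SINRsq M σ2 A β rhat rho l k) := by
  rw [one_add_SINRsq_eq_div M A rhat rho hσ hβ hk, eMSE_eq_quadratic, uopt, ← signalAmp]
  exact weighted_quadratic_at_opt (Dterm_sq_pos M A rhat rho hσ hβ l k)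
    (Acoef_eq_Dterm_add_sq M σ2 A β rhat rho hk)

lemma one_add_SINRsq_pos (hσ : 0 < σ2) (hβ : ∀ i t l, 0 ≤ β i t l)
    {l : Fin L} {k : Fin K} (hk : k ∈ A l) : 0 < 1 + SINRsq M σ2 A β rhat rho l k := by
  have hD := Dterm_sq_pos M A rhat rho hσ hβ l k
  rw [one_add_SINRsq_eq_div M A rhat rho hσ hβ hk, Acoef_eq_Dterm_add_sq M σ2 A β rhat rho hk]
  positivity

end Model

theorem stmt1_general {L K : ℕ} (M : ℕ)
    (σ2 : ℝ) (hσ : 0 < σ2)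
    (A : Fin L → Finset (Fin K))
    (β : Fin L → Fin K → Fin L → ℝ) (hβ : ∀ i t l, 0 ≤ β i t l)
    (rhat rho : Fin L → Fin K → ℝ) :
    IsLeast
      {y : ℝ | ∃ u w : Fin L → Fin K → ℝ,
        (∀ l, ∀ k ∈ A l, 0 < w l k) ∧ y = Fobj M σ2 A β u w rhat rho}
      ((∑ l, ((A l).card : ℝ)) -
        ∑ l, ∑ k ∈ A l, Real.log (1 + SINRsq M σ2 A β rhat rho l k)) ∧
    Fobj M σ2 A β (fun l k => uopt M σ2 A β rhat rho l k)
        (fun l k => 1 + SINRsq M σ2 A β rhat rho l k) rhat rho =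
      (∑ l, ((A l).card : ℝ)) -
        ∑ l, ∑ k ∈ A l, Real.log (1 + SINRsq M σ2 A β rhat rho l k) := by
  have hsum : (∑ l, ((A l).card : ℝ)) -
      ∑ l, ∑ k ∈ A l, Real.log (1 + SINRsq M σ2 A β rhat rho l k) =
      ∑ l, ∑ k ∈ A l, (1 - Real.log (1 + SINRsq M σ2 A β rhat rho l k)) := by
    simp only [Finset.sum_sub_distrib, Finset.sum_const, nsmul_eq_mul, mul_one]
  have hopt : Fobj M σ2 A β (fun l k => uopt M σ2 A β rhat rho l k)
      (fun l k => 1 + SINRsq M σ2 A β rhat rho l k) rhat rho =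
      (∑ l, ((A l).card : ℝ)) -
        ∑ l, ∑ k ∈ A l, Real.log (1 + SINRsq M σ2 A β rhat rho l k) := by
    rw [hsum, Fobj]
    exact Finset.sum_congr rfl fun l _ => Finset.sum_congr rfl fun k hk =>
      weighted_eMSE_uopt M A rhat rho hσ hβ hk
  refine ⟨⟨⟨_, _, fun l k hk => one_add_SINRsq_pos M A rhat rho hσ hβ hk, hopt.symm⟩, ?_⟩,
    hopt⟩
  rintro y ⟨u, w, hw, rfl⟩
  rw [hsum, Fobj]
  exact Finset.sum_le_sum fun l _ => Finset.sum_le_sum fun k hk =>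
    one_sub_log_one_add_SINRsq_le M A rhat rho hσ hβ hk (u l k) (hw l k hk)

/-- For nonnegative square-root powers, the infimum of the
weighted-MMSE objective `F(u, w, ρ̂, ρ)` over all real `u` and positive `w`
equals `Σ_l |A_l| − Σ_l Σ_{k∈A_l} ln(1 + SINR_{l,k}(ρ̂,ρ))`, and it is attained
at `u_{l,k} = u^opt_{l,k}(ρ̂,ρ)` and `w_{l,k} = 1 + SINR_{l,k}(ρ̂,ρ)`. -/
theorem stmt1 {L K : ℕ} (M : ℕ) (hL : 0 < L) (hK : 0 < K) (hM : 0 < M)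
    (σ2 : ℝ) (hσ : 0 < σ2)
    (A : Fin L → Finset (Fin K))
    (β : Fin L → Fin K → Fin L → ℝ) (hβ : ∀ i t l, 0 ≤ β i t l)
    (rhat rho : Fin L → Fin K → ℝ)
    (hrhat : ∀ i t, 0 ≤ rhat i t) (hrho : ∀ i t, 0 ≤ rho i t) :
    IsLeast
      {y : ℝ | ∃ u w : Fin L → Fin K → ℝ,
        (∀ l, ∀ k ∈ A l, 0 < w l k) ∧ y = Fobj M σ2 A β u w rhat rho}
      ((∑ l, ((A l).card : ℝ)) -
        ∑ l, ∑ k ∈ A l, Real.log (1 + SINRsq M σ2 A β rhat rho l k)) ∧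
    Fobj M σ2 A β (fun l k => uopt M σ2 A β rhat rho l k)
        (fun l k => 1 + SINRsq M σ2 A β rhat rho l k) rhat rho =
      (∑ l, ((A l).card : ℝ)) -
        ∑ l, ∑ k ∈ A l, Real.log (1 + SINRsq M σ2 A β rhat rho l k) :=
  stmt1_general M σ2 hσ A β hβ rhat rho
end
end

section
/- (Theorem 1.) Let P_{l,k} ≥ 0 be maximum power levels, and let S be the set of tuples (u, w, ρ̂, ρ) with u_{l,k} ∈ ℝ, w_{l,k} > 0, and 0 ≤ ρ̂_{l,k} ≤ √P_{l,k}, 0 ≤ ρ_{l,k} ≤ √P_{l,k} for all l and k ∈ A_l. If (u*, w*, ρ̂*, ρ*) ∈ S is a global minimizer of the weighted-MMSE objective F over S, i.e. F(u*,w*,ρ̂*,ρ*) ≤ F(u,w,ρ̂,ρ) for all (u,w,ρ̂,ρ) ∈ S, then the powers p̂*_{l,k} = (ρ̂*_{l,k})², p*_{l,k} = (ρ*_{l,k})² are a global maximizer of the sum spectral efficiency: Σ_{l=1}^L Σ_{k∈A_l} log₂(1 + SINR_{l,k}(p̂*, p*)) ≥ Σ_{l=1}^L Σ_{k∈A_l}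 log₂(1 + SINR_{l,k}(p̂, p)) for all powers satisfying 0 ≤ p̂_{l,k} ≤ P_{l,k} and 0 ≤ p_{l,k} ≤ P_{l,k} for all l, k ∈ A_l. -/
open Finset Filter

noncomputable section

section Helpers

/-- Abstract quadratic/log inequality: for `Dv > 0`, `w > 0`,
`w·(A u² − 2bu + 1) − ln w ≥ 1 − ln(A/Dv)` where `A = Dv + b²`. -/
lemma abstract_bound (Dv b u w : ℝ) (hD : 0 < Dv) (hw : 0 < w) :
    1 - Real.log ((Dv + b ^ 2) / Dv) ≤
      w * ((Dv + b ^ 2) * u ^ 2 - 2 * b * u + 1) - Real.log w := by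
  have hApos : 0 < Dv + b ^ 2 := by nlinarith [sq_nonneg b]
  have hemin : Dv / (Dv + b ^ 2) ≤ (Dv + b ^ 2) * u ^ 2 - 2 * b * u + 1 := by
    rw [div_le_iff₀ hApos]
    nlinarith [sq_nonneg ((Dv + b ^ 2) * u - b)]
  have hepos : 0 < (Dv + b ^ 2) * u ^ 2 - 2 * b * u + 1 :=
    lt_of_lt_of_le (div_pos hD hApos) hemin
  have h1 : Real.log (w * ((Dv + b ^ 2) * u ^ 2 - 2 * b * u + 1)) ≤
      w * ((Dv + b ^ 2) * u ^ 2 - 2 * b * u + 1) - 1 :=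
    Real.log_le_sub_one_of_pos (mul_pos hw hepos)
  rw [Real.log_mul hw.ne' hepos.ne'] at h1
  have h2 : Real.log (Dv / (Dv + b ^ 2)) ≤
      Real.log ((Dv + b ^ 2) * u ^ 2 - 2 * b * u + 1) :=
    Real.log_le_log (div_pos hD hApos) hemin
  have h3 : Real.log (Dv / (Dv + b ^ 2)) = Real.log Dv - Real.log (Dv + b ^ 2) :=
    Real.log_div hD.ne' hApos.ne'
  have h4 : Real.log ((Dv + b ^ 2) / Dv) = Real.log (Dv + b ^ 2) - Real.log Dv :=
    Real.log_div hApos.ne' hD.ne'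
  linarith

/-- Abstract equality at the optimum `u = b/A`, `w = A/Dv`. -/
lemma abstract_eq (Dv b : ℝ) (hD : 0 < Dv) :
    ((Dv + b ^ 2) / Dv) *
        ((Dv + b ^ 2) * (b / (Dv + b ^ 2)) ^ 2 - 2 * b * (b / (Dv + b ^ 2)) + 1) -
      Real.log ((Dv + b ^ 2) / Dv) = 1 - Real.log ((Dv + b ^ 2) / Dv) := by
  have hApos : 0 < Dv + b ^ 2 := by nlinarith [sq_nonneg b]
  have h : ((Dv + b ^ 2) / Dv) *
      ((Dv + b ^ 2) * (b / (Dv + b ^ 2)) ^ 2 - 2 * b * (b / (Dv + b ^ 2)) + 1) = 1 := by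
    field_simp
    ring
  rw [h]

variable {L K : ℕ} (M : ℕ) (σ2 : ℝ) (A : Fin L → Finset (Fin K))
    (β : Fin L → Fin K → Fin L → ℝ)

lemma Dsq_pos (hσ : 0 < σ2) (hβ : ∀ i t l, 0 ≤ β i t l)
    (rhat rho : Fin L → Fin K → ℝ) (l : Fin L) (k : Fin K) :
    0 < Dterm M σ2 A β (fun i t => rhat i t ^ 2) (fun i t => rho i t ^ 2) l k := by
  unfold Dterm
  have h1 : (0:ℝ) ≤ (M : ℝ) * (K : ℝ) *
      ∑ i ∈ (Pset A k).erase l, rho i k ^ 2 * rhat i k ^ 2 * β i k l ^ 2 := by positivity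
  have h2 : (0:ℝ) < (K : ℝ) * ∑ i ∈ Pset A k, rhat i k ^ 2 * β i k l + σ2 := by
    have : (0:ℝ) ≤ ∑ i ∈ Pset A k, rhat i k ^ 2 * β i k l :=
      Finset.sum_nonneg fun i _ => mul_nonneg (sq_nonneg _) (hβ i k l)
    positivity
  have h3 : (0:ℝ) < (∑ i, ∑ t ∈ A i, rho i t ^ 2 * β i t l) + σ2 := by
    have : (0:ℝ) ≤ ∑ i, ∑ t ∈ A i, rho i t ^ 2 * β i t l :=
      Finset.sum_nonneg fun i _ => Finset.sum_nonneg fun t _ =>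
        mul_nonneg (sq_nonneg _) (hβ i t l)
    positivity
  have := mul_pos h2 h3
  linarith

lemma Acoef_eq (rhat rho : Fin L → Fin K → ℝ) (l : Fin L) (k : Fin K) (hk : k ∈ A l) :
    Acoef M σ2 A β rhat rho l k =
      Dterm M σ2 A β (fun i t => rhat i t ^ 2) (fun i t => rho i t ^ 2) l k +
        (Real.sqrt ((M : ℝ) * (K : ℝ)) * rho l k * rhat l k * β l k l) ^ 2 := by
  have hl : l ∈ Pset A k := by simp [Pset, hk]
  have hMK : Real.sqrt ((M : ℝ) * (K : ℝ)) ^ 2 = (M : ℝ) * (K : ℝ) :=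
    Real.sq_sqrt (by positivity)
  have hsum : (∑ i ∈ (Pset A k).erase l, rho i k ^ 2 * rhat i k ^ 2 * β i k l ^ 2)
      + rho l k ^ 2 * rhat l k ^ 2 * β l k l ^ 2
      = ∑ i ∈ Pset A k, rho i k ^ 2 * rhat i k ^ 2 * β i k l ^ 2 :=
    Finset.sum_erase_add _ _ hl
  simp only [Acoef, Dterm]
  linear_combination (-(((M:ℝ))*(K:ℝ))) * hsum - (rho l k ^ 2 * rhat l k ^ 2 * β l k l ^ 2) * hMK

lemma eMSE_quad (u : ℝ) (rhat rho : Fin L → Fin K → ℝ) (l : Fin L) (k : Fin K) :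
    eMSE M σ2 A β u rhat rho l k =
      Acoef M σ2 A β rhat rho l k * u ^ 2 -
        2 * (Real.sqrt ((M : ℝ) * (K : ℝ)) * rho l k * rhat l k * β l k l) * u + 1 := by
  simp only [eMSE, Acoef]; ring

lemma SINRsq_eq (rhat rho : Fin L → Fin K → ℝ) (l : Fin L) (k : Fin K) :
    SINRsq M σ2 A β rhat rho l k =
      (Real.sqrt ((M : ℝ) * (K : ℝ)) * rho l k * rhat l k * β l k l) ^ 2 /
        Dterm M σ2 A β (fun i t => rhat i t ^ 2) (fun i t => rho i t ^ 2) l k := by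
  have hMK : Real.sqrt ((M : ℝ) * (K : ℝ)) ^ 2 = (M : ℝ) * (K : ℝ) :=
    Real.sq_sqrt (by positivity)
  simp only [SINRsq, SINR]
  congr 1
  linear_combination (-(rho l k ^ 2 * rhat l k ^ 2 * β l k l ^ 2)) * hMK

lemma oneAddSINRsq (hσ : 0 < σ2) (hβ : ∀ i t l, 0 ≤ β i t l)
    (rhat rho : Fin L → Fin K → ℝ) (l : Fin L) (k : Fin K) :
    1 + SINRsq M σ2 A β rhat rho l k =
      (Dterm M σ2 A β (fun i t => rhat i t ^ 2) (fun i t => rho i t ^ 2) l k +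
        (Real.sqrt ((M : ℝ) * (K : ℝ)) * rho l k * rhat l k * β l k l) ^ 2) /
      Dterm M σ2 A β (fun i t => rhat i t ^ 2) (fun i t => rho i t ^ 2) l k := by
  rw [SINRsq_eq, add_div, div_self (Dsq_pos M σ2 A β hσ hβ rhat rho l k).ne']

/-- Per-term lower bound. -/
lemma term_bound (hσ : 0 < σ2) (hβ : ∀ i t l, 0 ≤ β i t l)
    (rhat rho : Fin L → Fin K → ℝ) (l : Fin L) (k : Fin K) (hk : k ∈ A l)
    (u w : ℝ) (hw : 0 < w) :
    1 - Real.log (1 + SINRsq M σ2 A β rhat rho l k) ≤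
      w * eMSE M σ2 A β u rhat rho l k - Real.log w := by
  rw [oneAddSINRsq M σ2 A β hσ hβ, eMSE_quad, Acoef_eq M σ2 A β rhat rho l k hk]
  exact abstract_bound _ _ u w (Dsq_pos M σ2 A β hσ hβ rhat rho l k) hw

/-- Per-term equality at the optimal `u` and `w`. -/
lemma term_eq (hσ : 0 < σ2) (hβ : ∀ i t l, 0 ≤ β i t l)
    (rhat rho : Fin L → Fin K → ℝ) (l : Fin L) (k : Fin K) (hk : k ∈ A l) :
    (Acoef M σ2 A β rhat rho l k /
        Dterm M σ2 A β (fun i t => rhat i t ^ 2) (fun i t => rho i t ^ 2) l k) *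
      eMSE M σ2 A β (uopt M σ2 A β rhat rho l k) rhat rho l k -
      Real.log (Acoef M σ2 A β rhat rho l k /
        Dterm M σ2 A β (fun i t => rhat i t ^ 2) (fun i t => rho i t ^ 2) l k) =
    1 - Real.log (1 + SINRsq M σ2 A β rhat rho l k) := by
  have hu : uopt M σ2 A β rhat rho l k =
      (Real.sqrt ((M : ℝ) * (K : ℝ)) * rho l k * rhat l k * β l k l) /
        (Dterm M σ2 A β (fun i t => rhat i t ^ 2) (fun i t => rho i t ^ 2) l k +
          (Real.sqrt ((M : ℝ) * (K : ℝ)) * rho l k * rhat l k * β l k l) ^ 2) := by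
    rw [uopt, Acoef_eq M σ2 A β rhat rho l k hk]
  rw [oneAddSINRsq M σ2 A β hσ hβ, eMSE_quad, hu, Acoef_eq M σ2 A β rhat rho l k hk]
  exact abstract_eq _ _ (Dsq_pos M σ2 A β hσ hβ rhat rho l k)


/-- The SINR at square-root powers equals the SINR at the original powers. -/
lemma SINR_sqrt (phat p : Fin L → Fin K → ℝ)
    (hphat0 : ∀ i, ∀ t ∈ A i, 0 ≤ phat i t) (hp0 : ∀ i, ∀ t ∈ A i, 0 ≤ p i t)
    (l : Fin L) (k : Fin K) (hk : k ∈ A l) :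
    SINRsq M σ2 A β (fun i t => Real.sqrt (phat i t)) (fun i t => Real.sqrt (p i t)) l k =
      SINR M σ2 A β phat p l k := by
  have hmem : ∀ i : Fin L, i ∈ Pset A k → k ∈ A i := fun i hi => (Finset.mem_filter.mp hi).2
  have hsq : ∀ i, ∀ t ∈ A i, Real.sqrt (phat i t) ^ 2 = phat i t :=
    fun i t ht => Real.sq_sqrt (hphat0 i t ht)
  have hsq' : ∀ i, ∀ t ∈ A i, Real.sqrt (p i t) ^ 2 = p i t :=
    fun i t ht => Real.sq_sqrt (hp0 i t ht)
  have e1 : ∑ i ∈ (Pset A k).erase l,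
      Real.sqrt (p i k) ^ 2 * Real.sqrt (phat i k) ^ 2 * β i k l ^ 2 =
      ∑ i ∈ (Pset A k).erase l, p i k * phat i k * β i k l ^ 2 :=
    Finset.sum_congr rfl fun i hi => by
      have hki : k ∈ A i := hmem i (Finset.mem_of_mem_erase hi)
      rw [hsq i k hki, hsq' i k hki]
  have e2 : ∑ i ∈ Pset A k, Real.sqrt (phat i k) ^ 2 * β i k l =
      ∑ i ∈ Pset A k, phat i k * β i k l :=
    Finset.sum_congr rfl fun i hi => by rw [hsq i k (hmem i hi)]
  have e3 : ∑ i, ∑ t ∈ A i, Real.sqrt (p i t) ^ 2 * β i t l =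
      ∑ i, ∑ t ∈ A i, p i t * β i t l :=
    Finset.sum_congr rfl fun i _ => Finset.sum_congr rfl fun t ht => by rw [hsq' i t ht]
  simp only [SINRsq, SINR, Dterm]
  rw [hsq l k hk, hsq' l k hk, e1, e2, e3]

end Helpers

/-- Theorem 1: If `(u*, w*, ρ̂*, ρ*)` is a global minimizer of the
weighted-MMSE objective `F` over the set `S` (real `u`, positive `w`, and
square-root powers in `[0, √P_{l,k}]`), then the squared powers
`p̂* = (ρ̂*)²`, `p* = (ρ*)²` globally maximize the sum spectral efficiency
`Σ_l Σ_{k∈A_l} log₂(1 + SINR_{l,k}(p̂,p))` over the feasible power box. -/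
theorem stmt2 {L K : ℕ} (M : ℕ) (hL : 0 < L) (hK : 0 < K) (hM : 0 < M)
    (σ2 : ℝ) (hσ : 0 < σ2)
    (A : Fin L → Finset (Fin K))
    (β : Fin L → Fin K → Fin L → ℝ) (hβ : ∀ i t l, 0 ≤ β i t l)
    (Pm : Fin L → Fin K → ℝ) (hPm : ∀ l k, 0 ≤ Pm l k)
    (ustar wstar rhatstar rhostar : Fin L → Fin K → ℝ)
    (hfeas : ∀ l, ∀ k ∈ A l, 0 < wstar l k ∧
      0 ≤ rhatstar l k ∧ rhatstar l k ≤ Real.sqrt (Pm l k) ∧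
      0 ≤ rhostar l k ∧ rhostar l k ≤ Real.sqrt (Pm l k))
    (hmin : ∀ u w rhat rho : Fin L → Fin K → ℝ,
      (∀ l, ∀ k ∈ A l, 0 < w l k ∧
        0 ≤ rhat l k ∧ rhat l k ≤ Real.sqrt (Pm l k) ∧
        0 ≤ rho l k ∧ rho l k ≤ Real.sqrt (Pm l k)) →
      Fobj M σ2 A β ustar wstar rhatstar rhostar ≤ Fobj M σ2 A β u w rhat rho) :
    ∀ phat p : Fin L → Fin K → ℝ,
      (∀ l, ∀ k ∈ A l, 0 ≤ phat l k ∧ phat l k ≤ Pm l k ∧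
        0 ≤ p l k ∧ p l k ≤ Pm l k) →
      (∑ l, ∑ k ∈ A l, Real.logb 2 (1 + SINR M σ2 A β phat p l k)) ≤
        ∑ l, ∑ k ∈ A l, Real.logb 2 (1 +
          SINR M σ2 A β (fun i t => rhatstar i t ^ 2) (fun i t => rhostar i t ^ 2) l k) := by
  intro phat p hp
  have hlog2 : (0:ℝ) < Real.log 2 := Real.log_pos (by norm_num)
  -- notation for the square-root power point
  have hfeas2 : ∀ l, ∀ k ∈ A l,
      0 < (fun l k => Acoef M σ2 A β (fun i t => Real.sqrt (phat i t))
              (fun i t => Real.sqrt (p i t)) l k /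
            Dterm M σ2 A β (fun i t => Real.sqrt (phat i t) ^ 2)
              (fun i t => Real.sqrt (p i t) ^ 2) l k) l k ∧
      0 ≤ Real.sqrt (phat l k) ∧ Real.sqrt (phat l k) ≤ Real.sqrt (Pm l k) ∧
      0 ≤ Real.sqrt (p l k) ∧ Real.sqrt (p l k) ≤ Real.sqrt (Pm l k) := by
    intro l k hk
    obtain ⟨h1, h2, h3, h4⟩ := hp l k hk
    have hD := Dsq_pos M σ2 A β hσ hβ (fun i t => Real.sqrt (phat i t))
      (fun i t => Real.sqrt (p i t)) l k
    have hA : 0 < Acoef M σ2 A β (fun i t => Real.sqrt (phat i t))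
        (fun i t => Real.sqrt (p i t)) l k := by
      rw [Acoef_eq M σ2 A β _ _ l k hk]
      nlinarith [sq_nonneg (Real.sqrt ((M:ℝ)*(K:ℝ)) * Real.sqrt (p l k) *
        Real.sqrt (phat l k) * β l k l), hD]
    exact ⟨div_pos hA hD, Real.sqrt_nonneg _, Real.sqrt_le_sqrt h2,
      Real.sqrt_nonneg _, Real.sqrt_le_sqrt h4⟩
  have hmono := hmin
    (fun l k => uopt M σ2 A β (fun i t => Real.sqrt (phat i t))
      (fun i t => Real.sqrt (p i t)) l k)
    (fun l k => Acoef M σ2 A β (fun i t => Real.sqrt (phat i t))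
        (fun i t => Real.sqrt (p i t)) l k /
      Dterm M σ2 A β (fun i t => Real.sqrt (phat i t) ^ 2)
        (fun i t => Real.sqrt (p i t) ^ 2) l k)
    (fun i t => Real.sqrt (phat i t)) (fun i t => Real.sqrt (p i t)) hfeas2
  have hFopt : Fobj M σ2 A β
      (fun l k => uopt M σ2 A β (fun i t => Real.sqrt (phat i t))
        (fun i t => Real.sqrt (p i t)) l k)
      (fun l k => Acoef M σ2 A β (fun i t => Real.sqrt (phat i t))
          (fun i t => Real.sqrt (p i t)) l k /
        Dterm M σ2 A β (fun i t => Real.sqrt (phat i t) ^ 2)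
          (fun i t => Real.sqrt (p i t) ^ 2) l k)
      (fun i t => Real.sqrt (phat i t)) (fun i t => Real.sqrt (p i t)) =
      ∑ l, ∑ k ∈ A l, (1 - Real.log (1 + SINRsq M σ2 A β
        (fun i t => Real.sqrt (phat i t)) (fun i t => Real.sqrt (p i t)) l k)) := by
    unfold Fobj
    exact Finset.sum_congr rfl fun l _ => Finset.sum_congr rfl fun k hk =>
      term_eq M σ2 A β hσ hβ _ _ l k hk
  have hFstar : ∑ l, ∑ k ∈ A l,
      (1 - Real.log (1 + SINRsq M σ2 A β rhatstar rhostar l k)) ≤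
      Fobj M σ2 A β ustar wstar rhatstar rhostar := by
    unfold Fobj
    refine Finset.sum_le_sum fun l _ => Finset.sum_le_sum fun k hk => ?_
    exact term_bound M σ2 A β hσ hβ rhatstar rhostar l k hk (ustar l k) (wstar l k)
      (hfeas l k hk).1
  have k1 : ∑ l, ∑ k ∈ A l, (1 - Real.log (1 + SINRsq M σ2 A β
      (fun i t => Real.sqrt (phat i t)) (fun i t => Real.sqrt (p i t)) l k)) =
      (∑ l, ((A l).card : ℝ)) - ∑ l, ∑ k ∈ A l, Real.log (1 + SINRsq M σ2 A β
        (fun i t => Real.sqrt (phat i t)) (fun i t => Real.sqrt (p i t)) l k) := by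
    rw [← Finset.sum_sub_distrib]
    exact Finset.sum_congr rfl fun l _ => by
      rw [Finset.sum_sub_distrib, Finset.sum_const, nsmul_eq_mul, mul_one]
  have k2 : ∑ l, ∑ k ∈ A l, (1 - Real.log (1 + SINRsq M σ2 A β rhatstar rhostar l k)) =
      (∑ l, ((A l).card : ℝ)) -
        ∑ l, ∑ k ∈ A l, Real.log (1 + SINRsq M σ2 A β rhatstar rhostar l k) := by
    rw [← Finset.sum_sub_distrib]
    exact Finset.sum_congr rfl fun l _ => by
      rw [Finset.sum_sub_distrib, Finset.sum_const, nsmul_eq_mul, mul_one]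
  have hG : ∑ l, ∑ k ∈ A l, Real.log (1 + SINRsq M σ2 A β
      (fun i t => Real.sqrt (phat i t)) (fun i t => Real.sqrt (p i t)) l k) ≤
      ∑ l, ∑ k ∈ A l, Real.log (1 + SINRsq M σ2 A β rhatstar rhostar l k) := by
    linarith [hFstar, hmono, hFopt, k1, k2]
  have hL : ∑ l, ∑ k ∈ A l, Real.log (1 + SINR M σ2 A β phat p l k) =
      ∑ l, ∑ k ∈ A l, Real.log (1 + SINRsq M σ2 A β
        (fun i t => Real.sqrt (phat i t)) (fun i t => Real.sqrt (p i t)) l k) := by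
    refine Finset.sum_congr rfl fun l _ => Finset.sum_congr rfl fun k hk => ?_
    rw [SINR_sqrt M σ2 A β phat p (fun i t ht => (hp i t ht).1)
      (fun i t ht => (hp i t ht).2.2.1) l k hk]
  have hcore : (∑ l, ∑ k ∈ A l, Real.log (1 + SINR M σ2 A β phat p l k)) ≤
      ∑ l, ∑ k ∈ A l, Real.log (1 + SINR M σ2 A β
        (fun i t => rhatstar i t ^ 2) (fun i t => rhostar i t ^ 2) l k) := by
    rw [hL]
    simpa only [SINRsq] using hG
  simp only [Real.logb, ← Finset.sum_div]
  gcongr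
end
end

section
/- (Pilot-power update of Theorem 2, eq. (18).) Fix nonnegative u = (u_{l,k}), nonnegative w = (w_{l,k}), and nonnegative data square-root powers ρ, and suppose η̂_{l,k}(u,w,ρ) > 0 for every l and k ∈ A_l. Then the map ρ̂ ↦ Σ_{l=1}^L Σ_{k∈A_l} w_{l,k} e_{l,k}(u_{l,k}, ρ̂, ρ), restricted to the box {ρ̂ : 0 ≤ ρ̂_{l,k} ≤ √P_{l,k} for all l, k ∈ A_l}, attains its global minimum at the point ρ̂* with coordinates ρ̂*_{l,k} = min( √(M K) ρ_{l,k} u_{l,k} w_{l,k} β_{l,k}^l / η̂_{l,k}(u,w,ρ), √P_{l,k} ). -/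
/-!
Each pilot power `ρ̂_{i,k}²` enters the weighted MSE of every pair `(l, k)` with `l ∈ P_k`.
Collecting these terms by pilot instead of by receiver writes the objective as
`Σ_{l,k} (η̂_{l,k} ρ̂_{l,k}² - 2 c_{l,k} ρ̂_{l,k})` plus a constant, where
`c_{l,k} = √(MK) ρ_{l,k} u_{l,k} w_{l,k} β_{l,k}^l`. The problem therefore splits into
one-variable quadratics, each minimised on `[0, √P_{l,k}]` by clamping its vertex
`c_{l,k} / η̂_{l,k}`.
-/

open Finset Filter

noncomputable section

/-- The contribution of the pilot of cell `i` for user index `k` to `w_{l,k} e_{l,k}`.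
Summed over `i` it gives the pilot-dependent part of `w_{l,k} e_{l,k}`; summed over `l`
instead it gives `η̂_{i,k} ρ̂_{i,k}²`. -/
def pilotCrossTerm {L K : ℕ} (M : ℕ) (σ2 : ℝ) (A : Fin L → Finset (Fin K))
    (β : Fin L → Fin K → Fin L → ℝ) (u w rho rhat : Fin L → Fin K → ℝ)
    (l : Fin L) (k : Fin K) (i : Fin L) : ℝ :=
  w l k * u l k ^ 2 * rhat i k ^ 2 *
    ((M : ℝ) * (K : ℝ) * rho i k ^ 2 * β i k l ^ 2 +
      (K : ℝ) * β i k l * ((∑ a, ∑ t ∈ A a, rho a t ^ 2 * β a t l) + σ2))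

def pilotLinearCoef {L K : ℕ} (M : ℕ) (β : Fin L → Fin K → Fin L → ℝ)
    (u w rho : Fin L → Fin K → ℝ) (l : Fin L) (k : Fin K) : ℝ :=
  Real.sqrt ((M : ℝ) * (K : ℝ)) * rho l k * u l k * w l k * β l k l

section ActivePairs

variable {L K : ℕ} (A : Fin L → Finset (Fin K))

theorem sum_active_eq_sum_pset (g : Fin L → Fin K → ℝ) :
    ∑ l, ∑ k ∈ A l, g l k = ∑ k, ∑ l ∈ Pset A k, g l k :=
  Finset.sum_comm' fun l k => by simp [Pset]

theorem sum_active_sum_pset_swap (f : Fin L → Fin K → Fin L → ℝ) :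
    ∑ l, ∑ k ∈ A l, ∑ i ∈ Pset A k, f l k i = ∑ l, ∑ k ∈ A l, ∑ i ∈ Pset A k, f i k l := by
  rw [sum_active_eq_sum_pset A fun l k => ∑ i ∈ Pset A k, f l k i,
    sum_active_eq_sum_pset A fun l k => ∑ i ∈ Pset A k, f i k l]
  exact Finset.sum_congr rfl fun k _ => Finset.sum_comm

end ActivePairs

section PilotObjective

variable {L K : ℕ} (M : ℕ) (σ2 : ℝ) (A : Fin L → Finset (Fin K))
  (β : Fin L → Fin K → Fin L → ℝ) (u w rho : Fin L → Fin K → ℝ)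

theorem mul_eMSE_eq_sum_pilotCrossTerm (rhat : Fin L → Fin K → ℝ) (l : Fin L) (k : Fin K) :
    w l k * eMSE M σ2 A β (u l k) rhat rho l k
      = ∑ i ∈ Pset A k, pilotCrossTerm M σ2 A β u w rho rhat l k i
        - 2 * pilotLinearCoef M β u w rho l k * rhat l k
        + w l k * (u l k ^ 2 * σ2 * ((∑ a, ∑ t ∈ A a, rho a t ^ 2 * β a t l) + σ2) + 1) := by
  have hcross : ∑ i ∈ Pset A k, pilotCrossTerm M σ2 A β u w rho rhat l k i
      = w l k * u l k ^ 2 * ((M : ℝ) * (K : ℝ)) *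
          ∑ i ∈ Pset A k, rho i k ^ 2 * rhat i k ^ 2 * β i k l ^ 2
        + w l k * u l k ^ 2 * (K : ℝ) * ((∑ a, ∑ t ∈ A a, rho a t ^ 2 * β a t l) + σ2) *
          ∑ i ∈ Pset A k, rhat i k ^ 2 * β i k l := by
    rw [Finset.mul_sum, Finset.mul_sum, ← Finset.sum_add_distrib]
    exact Finset.sum_congr rfl fun i _ => by rw [pilotCrossTerm]; ring
  rw [hcross, eMSE, pilotLinearCoef]
  ring

theorem etaHat_mul_sq_eq_sum_pilotCrossTerm (rhat : Fin L → Fin K → ℝ)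
    (l : Fin L) (k : Fin K) :
    etaHat M σ2 A β u w rho l k * rhat l k ^ 2
      = ∑ i ∈ Pset A k, pilotCrossTerm M σ2 A β u w rho rhat i k l := by
  rw [etaHat, add_mul, Finset.mul_sum, Finset.mul_sum, Finset.sum_mul, Finset.sum_mul,
    ← Finset.sum_add_distrib]
  exact Finset.sum_congr rfl fun i _ => by rw [pilotCrossTerm]; ring

theorem exists_sum_mul_eMSE_eq_sum_quadratic_add_const :
    ∃ C : ℝ, ∀ rhat : Fin L → Fin K → ℝ,
      ∑ l, ∑ k ∈ A l, w l k * eMSE M σ2 A β (u l k) rhat rho l k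
        = ∑ l, ∑ k ∈ A l, (etaHat M σ2 A β u w rho l k * rhat l k ^ 2
            - 2 * pilotLinearCoef M β u w rho l k * rhat l k) + C := by
  refine ⟨∑ l, ∑ k ∈ A l,
    w l k * (u l k ^ 2 * σ2 * ((∑ a, ∑ t ∈ A a, rho a t ^ 2 * β a t l) + σ2) + 1),
    fun rhat => ?_⟩
  simp only [mul_eMSE_eq_sum_pilotCrossTerm, etaHat_mul_sq_eq_sum_pilotCrossTerm,
    Finset.sum_add_distrib, Finset.sum_sub_distrib]
  rw [sum_active_sum_pset_swap A (pilotCrossTerm M σ2 A β u w rho rhat)]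

end PilotObjective

theorem quadratic_min_vertex_le {η c P x : ℝ} (hη : 0 < η) (hxP : x ≤ P) :
    η * min (c / η) P ^ 2 - 2 * c * min (c / η) P ≤ η * x ^ 2 - 2 * c * x := by
  set m := min (c / η) P
  have hdiff : η * x ^ 2 - 2 * c * x - (η * m ^ 2 - 2 * c * m)
      = (x - m) * (η * (x + m) - 2 * c) := by
    ring
  suffices 0 ≤ (x - m) * (η * (x + m) - 2 * c) by linarith
  rcases le_total (c / η) P with hv | hv
  · have hm : η * m = c := by
      rw [show m = c / η from min_eq_left hv, mul_div_cancel₀ _ hη.ne']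
    have hsq : (x - m) * (η * (x + m) - 2 * c) = η * (x - m) ^ 2 := by rw [← hm]; ring
    rw [hsq]
    positivity
  · have hm : m = P := min_eq_right hv
    have hηP : η * P ≤ c := (le_div_iff₀' hη).1 hv
    apply mul_nonneg_of_nonpos_of_nonpos <;> nlinarith

theorem stmt5_general {L K : ℕ} (M : ℕ) (σ2 : ℝ) (A : Fin L → Finset (Fin K))
    (β : Fin L → Fin K → Fin L → ℝ) (hβ : ∀ i t l, 0 ≤ β i t l)
    (Pm : Fin L → Fin K → ℝ) (u w rho : Fin L → Fin K → ℝ)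
    (hu : ∀ i t, 0 ≤ u i t) (hw : ∀ i t, 0 ≤ w i t) (hrho : ∀ i t, 0 ≤ rho i t)
    (hEta : ∀ l, ∀ k ∈ A l, 0 < etaHat M σ2 A β u w rho l k) :
    let rhatstar : Fin L → Fin K → ℝ := fun l k =>
      min (Real.sqrt ((M : ℝ) * (K : ℝ)) * rho l k * u l k * w l k * β l k l /
            etaHat M σ2 A β u w rho l k)
          (Real.sqrt (Pm l k))
    (∀ l, ∀ k ∈ A l, 0 ≤ rhatstar l k ∧ rhatstar l k ≤ Real.sqrt (Pm l k)) ∧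
    ∀ rhat : Fin L → Fin K → ℝ,
      (∀ l, ∀ k ∈ A l, 0 ≤ rhat l k ∧ rhat l k ≤ Real.sqrt (Pm l k)) →
      (∑ l, ∑ k ∈ A l, w l k * eMSE M σ2 A β (u l k) rhatstar rho l k) ≤
        ∑ l, ∑ k ∈ A l, w l k * eMSE M σ2 A β (u l k) rhat rho l k := by
  intro rhatstar
  have hcoef : ∀ l k, 0 ≤ pilotLinearCoef M β u w rho l k := fun l k => by
    unfold pilotLinearCoef
    have := hβ l k l; have := hu l k; have := hw l k; have := hrho l k
    positivity
  refine ⟨fun l k hk => ⟨le_min (div_nonneg (hcoef l k) (hEta l k hk).le) (Real.sqrt_nonneg _),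
    min_le_right _ _⟩, fun rhat hbox => ?_⟩
  obtain ⟨C, hC⟩ := exists_sum_mul_eMSE_eq_sum_quadratic_add_const M σ2 A β u w rho
  rw [hC, hC]
  refine add_le_add_left (Finset.sum_le_sum fun l _ => Finset.sum_le_sum fun k hk => ?_) C
  exact quadratic_min_vertex_le (hEta l k hk) (hbox l k hk).2

/-- pilot-power update, eq. (18): for nonnegative `u`, `w`, `ρ` with
`η̂_{l,k}(u,w,ρ) > 0` on all active pairs, the map
`ρ̂ ↦ Σ_l Σ_{k∈A_l} w_{l,k} e_{l,k}(u_{l,k}, ρ̂, ρ)` restricted to the box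
`0 ≤ ρ̂_{l,k} ≤ √P_{l,k}` attains its global minimum at
`ρ̂*_{l,k} = min(√(MK) ρ_{l,k} u_{l,k} w_{l,k} β_{l,k}^l / η̂_{l,k}, √P_{l,k})`. -/
theorem stmt5 {L K : ℕ} (M : ℕ) (hL : 0 < L) (hK : 0 < K) (hM : 0 < M)
    (σ2 : ℝ) (hσ : 0 < σ2)
    (A : Fin L → Finset (Fin K))
    (β : Fin L → Fin K → Fin L → ℝ) (hβ : ∀ i t l, 0 ≤ β i t l)
    (Pm : Fin L → Fin K → ℝ) (hPm : ∀ l k, 0 ≤ Pm l k)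
    (u w rho : Fin L → Fin K → ℝ)
    (hu : ∀ i t, 0 ≤ u i t) (hw : ∀ i t, 0 ≤ w i t) (hrho : ∀ i t, 0 ≤ rho i t)
    (hEta : ∀ l, ∀ k ∈ A l, 0 < etaHat M σ2 A β u w rho l k) :
    let rhatstar : Fin L → Fin K → ℝ := fun l k =>
      min (Real.sqrt ((M : ℝ) * (K : ℝ)) * rho l k * u l k * w l k * β l k l /
            etaHat M σ2 A β u w rho l k)
          (Real.sqrt (Pm l k))
    (∀ l, ∀ k ∈ A l, 0 ≤ rhatstar l k ∧ rhatstar l k ≤ Real.sqrt (Pm l k)) ∧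
    ∀ rhat : Fin L → Fin K → ℝ,
      (∀ l, ∀ k ∈ A l, 0 ≤ rhat l k ∧ rhat l k ≤ Real.sqrt (Pm l k)) →
      (∑ l, ∑ k ∈ A l, w l k * eMSE M σ2 A β (u l k) rhatstar rho l k) ≤
        ∑ l, ∑ k ∈ A l, w l k * eMSE M σ2 A β (u l k) rhat rho l k :=
  stmt5_general M σ2 A β hβ Pm u w rho hu hw hrho hEta
end
end

section
/- (Data-power update of Theorem 2, eq. (20).) Fix nonnegative u = (u_{l,k}), nonnegative w = (w_{l,k}), and nonnegative pilot square-root powers ρ̂, and suppose η_{l,k}(u,w,ρ̂) > 0 for every l and k ∈ A_l. Then the map ρ ↦ Σ_{l=1}^L Σ_{k∈A_l} w_{l,k} e_{l,k}(u_{l,k}, ρ̂, ρ), restricted to the box {ρ : 0 ≤ ρ_{l,k} ≤ √P_{l,k} for all l, k ∈ A_l}, attains its global minimum at the point ρ* with coordinates ρ*_{l,k} = min( √(M K) ρ̂_{l,k} u_{l,k} w_{l,k} β_{l,k}^l / η_{l,k}(u,w,ρ̂), √P_{l,k} ). -/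
open Finset Filter

noncomputable section

/-!
As a function of the data square-root powers `ρ`, the weighted MSE `Σ w_{l,k} e_{l,k}` is a
quadratic in the variables `ρ_{l,k}` without cross terms: every `ρ_{i,t}²` occurring inside
`e_{l,k}` can be moved, by exchanging the order of summation, to the summand of index `(i,t)`,
where it is collected into the coefficient `η_{i,t}`. The objective therefore splits as
`Σ (η_{l,k} ρ_{l,k}² - 2 c_{l,k} ρ_{l,k}) + const` with
`c_{l,k} = √(MK) ρ̂_{l,k} u_{l,k} w_{l,k} β_{l,k}^l`, and each one-dimensional convex quadratic
is minimised on `(-∞, √P_{l,k}]` at the clamped vertex `min (c_{l,k}/η_{l,k}) √P_{l,k}`.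
-/

section

variable {L K : ℕ} (A : Fin L → Finset (Fin K))

lemma sum_active_eq_sum_Pset (f : Fin L → Fin K → ℝ) :
    ∑ l, ∑ k ∈ A l, f l k = ∑ k, ∑ l ∈ Pset A k, f l k :=
  Finset.sum_comm' fun l k => by simp [Pset]

lemma sum_active_mul_sum_Pset_transpose (a : Fin L → Fin K → ℝ)
    (b : Fin L → Fin K → Fin L → ℝ) :
    ∑ l, ∑ k ∈ A l, a l k * ∑ i ∈ Pset A k, b i k l
      = ∑ l, ∑ k ∈ A l, ∑ i ∈ Pset A k, a i k * b l k i := by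
  simp only [Finset.mul_sum]
  rw [sum_active_eq_sum_Pset A, sum_active_eq_sum_Pset A]
  exact Finset.sum_congr rfl fun k _ => Finset.sum_comm

lemma sum_active_mul_sum_active_transpose (a : Fin L → Fin K → ℝ)
    (b : Fin L → Fin K → Fin L → ℝ) :
    ∑ l, ∑ k ∈ A l, a l k * ∑ i, ∑ t ∈ A i, b i t l
      = ∑ l, ∑ k ∈ A l, ∑ i, ∑ t ∈ A i, a i t * b l k i := by
  have sum_active_eq_sum_sigma (g : Fin L → Fin K → ℝ) :
      ∑ l, ∑ k ∈ A l, g l k = ∑ p ∈ univ.sigma A, g p.1 p.2 :=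
    (Finset.sum_sigma univ A fun p => g p.1 p.2).symm
  simp only [Finset.mul_sum, sum_active_eq_sum_sigma]
  exact Finset.sum_comm

end

lemma etaData_mul_sq {L K : ℕ} (M : ℕ) (σ2 : ℝ) (A : Fin L → Finset (Fin K))
    (β : Fin L → Fin K → Fin L → ℝ) (u w rhat rho : Fin L → Fin K → ℝ)
    (l : Fin L) (k : Fin K) :
    etaData M σ2 A β u w rhat l k * rho l k ^ 2
      = ∑ i ∈ Pset A k,
          w i k * ((M : ℝ) * K * u i k ^ 2) * (rho l k ^ 2 * rhat l k ^ 2 * β l k i ^ 2)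
        + ∑ i, ∑ t ∈ A i,
            w i t * u i t ^ 2 * ((K : ℝ) * ∑ j ∈ Pset A t, rhat j t ^ 2 * β j t i + σ2)
              * (rho l k ^ 2 * β l k i) := by
  simp only [etaData, add_mul, Finset.mul_sum, Finset.sum_mul]
  congr 1
  · exact Finset.sum_congr rfl fun i _ => by ring
  · exact Finset.sum_congr rfl fun i _ => Finset.sum_congr rfl fun t _ => by ring

lemma sum_weighted_eMSE_eq {L K : ℕ} (M : ℕ) (σ2 : ℝ) (A : Fin L → Finset (Fin K))
    (β : Fin L → Fin K → Fin L → ℝ) (u w rhat rho : Fin L → Fin K → ℝ) :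
    ∑ l, ∑ k ∈ A l, w l k * eMSE M σ2 A β (u l k) rhat rho l k
      = ∑ l, ∑ k ∈ A l,
          (etaData M σ2 A β u w rhat l k * rho l k ^ 2
            - 2 * (Real.sqrt ((M : ℝ) * K) * rhat l k * u l k * w l k * β l k l) * rho l k)
        + ∑ l, ∑ k ∈ A l,
            w l k *
              (u l k ^ 2 * ((K : ℝ) * ∑ i ∈ Pset A k, rhat i k ^ 2 * β i k l + σ2) * σ2 + 1) := by
  have hcoherent := sum_active_mul_sum_Pset_transpose A
    (fun l k => w l k * ((M : ℝ) * K * u l k ^ 2))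
    fun i k l => rho i k ^ 2 * rhat i k ^ 2 * β i k l ^ 2
  have hnoncoherent := sum_active_mul_sum_active_transpose A
    (fun l k => w l k * u l k ^ 2 * ((K : ℝ) * ∑ i ∈ Pset A k, rhat i k ^ 2 * β i k l + σ2))
    fun i t l => rho i t ^ 2 * β i t l
  calc ∑ l, ∑ k ∈ A l, w l k * eMSE M σ2 A β (u l k) rhat rho l k
      = ∑ l, ∑ k ∈ A l, w l k * ((M : ℝ) * K * u l k ^ 2) *
            ∑ i ∈ Pset A k, rho i k ^ 2 * rhat i k ^ 2 * β i k l ^ 2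
        + ∑ l, ∑ k ∈ A l,
            w l k * u l k ^ 2 * ((K : ℝ) * ∑ i ∈ Pset A k, rhat i k ^ 2 * β i k l + σ2) *
              ∑ i, ∑ t ∈ A i, rho i t ^ 2 * β i t l
        + ∑ l, ∑ k ∈ A l,
            (-(2 * (Real.sqrt ((M : ℝ) * K) * rhat l k * u l k * w l k * β l k l) * rho l k)
              + w l k *
                  (u l k ^ 2 * ((K : ℝ) * ∑ i ∈ Pset A k, rhat i k ^ 2 * β i k l + σ2) * σ2
                    + 1)) := by
        simp only [← Finset.sum_add_distrib]
        exact Finset.sum_congr rfl fun l _ => Finset.sum_congr rfl fun k _ => by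
          unfold eMSE; ring
    _ = _ := by
        rw [hcoherent, hnoncoherent]
        simp only [etaData_mul_sq, ← Finset.sum_add_distrib]
        exact Finset.sum_congr rfl fun l _ => Finset.sum_congr rfl fun k _ => by ring

lemma isMinOn_quadratic_Iic {η c P : ℝ} (hη : 0 < η) :
    IsMinOn (fun x => η * x ^ 2 - 2 * c * x) (Set.Iic P) (min (c / η) P) := by
  intro x (hxP : x ≤ P)
  show η * min (c / η) P ^ 2 - 2 * c * min (c / η) P ≤ η * x ^ 2 - 2 * c * x
  have hvertex : η * (c / η) = c := mul_div_cancel₀ c hη.ne'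
  rcases le_total (c / η) P with h | h
  · rw [min_eq_left h]
    nlinarith [mul_nonneg hη.le (sq_nonneg (x - c / η))]
  · rw [min_eq_right h]
    nlinarith [mul_le_mul_of_nonneg_left h hη.le, mul_le_mul_of_nonneg_left hxP hη.le]

theorem stmt6_general {L K : ℕ} (M : ℕ)
    (σ2 : ℝ)
    (A : Fin L → Finset (Fin K))
    (β : Fin L → Fin K → Fin L → ℝ) (hβ : ∀ i t l, 0 ≤ β i t l)
    (Pm : Fin L → Fin K → ℝ)
    (u w rhat : Fin L → Fin K → ℝ)
    (hu : ∀ i t, 0 ≤ u i t) (hw : ∀ i t, 0 ≤ w i t) (hrhat : ∀ i t, 0 ≤ rhat i t)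
    (hEta : ∀ l, ∀ k ∈ A l, 0 < etaData M σ2 A β u w rhat l k) :
    let rhostar : Fin L → Fin K → ℝ := fun l k =>
      min (Real.sqrt ((M : ℝ) * (K : ℝ)) * rhat l k * u l k * w l k * β l k l /
            etaData M σ2 A β u w rhat l k)
          (Real.sqrt (Pm l k))
    (∀ l, ∀ k ∈ A l, 0 ≤ rhostar l k ∧ rhostar l k ≤ Real.sqrt (Pm l k)) ∧
    ∀ rho : Fin L → Fin K → ℝ,
      (∀ l, ∀ k ∈ A l, 0 ≤ rho l k ∧ rho l k ≤ Real.sqrt (Pm l k)) →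
      (∑ l, ∑ k ∈ A l, w l k * eMSE M σ2 A β (u l k) rhat rhostar l k) ≤
        ∑ l, ∑ k ∈ A l, w l k * eMSE M σ2 A β (u l k) rhat rho l k := by
  intro rhostar
  have hc l k : 0 ≤ Real.sqrt ((M : ℝ) * K) * rhat l k * u l k * w l k * β l k l := by
    have := hrhat l k; have := hu l k; have := hw l k; have := hβ l k l
    positivity
  refine ⟨fun l k hk => ⟨le_min (div_nonneg (hc l k) (hEta l k hk).le) (Real.sqrt_nonneg _),
    min_le_right _ _⟩, fun rho hrho => ?_⟩
  rw [sum_weighted_eMSE_eq, sum_weighted_eMSE_eq]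
  refine add_le_add_left (Finset.sum_le_sum fun l _ => Finset.sum_le_sum fun k hk => ?_) _
  exact isMinOn_quadratic_Iic (hEta l k hk) (hrho l k hk).2

/-- data-power update, eq. (20): for nonnegative `u`, `w`, `ρ̂` with
`η_{l,k}(u,w,ρ̂) > 0` on all active pairs, the map
`ρ ↦ Σ_l Σ_{k∈A_l} w_{l,k} e_{l,k}(u_{l,k}, ρ̂, ρ)` restricted to the box
`0 ≤ ρ_{l,k} ≤ √P_{l,k}` attains its global minimum at
`ρ*_{l,k} = min(√(MK) ρ̂_{l,k} u_{l,k} w_{l,k} β_{l,k}^l / η_{l,k}, √P_{l,k})`. -/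
theorem stmt6 {L K : ℕ} (M : ℕ) (hL : 0 < L) (hK : 0 < K) (hM : 0 < M)
    (σ2 : ℝ) (hσ : 0 < σ2)
    (A : Fin L → Finset (Fin K))
    (β : Fin L → Fin K → Fin L → ℝ) (hβ : ∀ i t l, 0 ≤ β i t l)
    (Pm : Fin L → Fin K → ℝ) (hPm : ∀ l k, 0 ≤ Pm l k)
    (u w rhat : Fin L → Fin K → ℝ)
    (hu : ∀ i t, 0 ≤ u i t) (hw : ∀ i t, 0 ≤ w i t) (hrhat : ∀ i t, 0 ≤ rhat i t)
    (hEta : ∀ l, ∀ k ∈ A l, 0 < etaData M σ2 A β u w rhat l k) :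
    let rhostar : Fin L → Fin K → ℝ := fun l k =>
      min (Real.sqrt ((M : ℝ) * (K : ℝ)) * rhat l k * u l k * w l k * β l k l /
            etaData M σ2 A β u w rhat l k)
          (Real.sqrt (Pm l k))
    (∀ l, ∀ k ∈ A l, 0 ≤ rhostar l k ∧ rhostar l k ≤ Real.sqrt (Pm l k)) ∧
    ∀ rho : Fin L → Fin K → ℝ,
      (∀ l, ∀ k ∈ A l, 0 ≤ rho l k ∧ rho l k ≤ Real.sqrt (Pm l k)) →
      (∑ l, ∑ k ∈ A l, w l k * eMSE M σ2 A β (u l k) rhat rhostar l k) ≤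
        ∑ l, ∑ k ∈ A l, w l k * eMSE M σ2 A β (u l k) rhat rho l k :=
  stmt6_general M σ2 A β hβ Pm u w rhat hu hw hrhat hEta
end
end
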